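/- Let H, H' ∈ ℝ^{n×n} be constant matrices and define φ(M)(x) = diag(x)(Mx − (xᵀMx)𝟏) for a constant matrix M. Then φ(H)(x) = φ(H')(x) for all x ∈ ℝⁿ with xᵀ𝟏 = 1 if and only if there exists v ∈ ℝⁿ such that H = H' + 𝟏 vᵀ. -/

import Mathlib

/-!
The field `φ(M)` is linear in `M`, so it suffices to show that `φ(D)` vanishes on the
hyperplane `∑ xᵢ = 1` exactly when all rows of `D` agree. If they do, `D x` is a constant
vector whose value is `xᵀ D x`. Conversely, on the line `x = a eᵢ + b eⱼ` (`a + b = 1`) the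
`i`-th component of `φ(D)(x)` is `a b ((D x)ᵢ − (D x)ⱼ)`; two points with `a b ≠ 0` force
`Dᵢⱼ = Dⱼⱼ`.
-/

open Matrix

variable {ι R : Type*} [Fintype ι]

/-- `replicatorField M` is the map `φ(M)`. -/
def replicatorField [CommRing R] (M : Matrix ι ι R) (x : ι → R) : ι → R :=
  fun i => x i * ((M *ᵥ x) i - x ⬝ᵥ (M *ᵥ x))

section CommRing

variable [CommRing R]

theorem replicatorField_add (A B : Matrix ι ι R) (x : ι → R) :
    replicatorField (A + B) x = replicatorField A x + replicatorField B x := by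
  ext i
  simp only [replicatorField, add_mulVec, Pi.add_apply, dotProduct_add]
  ring

theorem replicatorField_sub (A B : Matrix ι ι R) (x : ι → R) :
    replicatorField (A - B) x = replicatorField A x - replicatorField B x := by
  ext i
  simp only [replicatorField, sub_mulVec, Pi.sub_apply, dotProduct_sub]
  ring

theorem replicatorField_vecMulVec_one {x : ι → R} (hx : ∑ i, x i = 1) (v : ι → R) :
    replicatorField (vecMulVec (fun _ => 1) v) x = 0 := by
  have hmul : vecMulVec (fun _ : ι => 1) v *ᵥ x = fun _ => v ⬝ᵥ x := by
    ext; simp [vecMulVec_mulVec]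
  ext i
  simp [replicatorField, hmul, dotProduct, ← Finset.sum_mul, hx]

theorem replicatorField_single_add_single [DecidableEq ι] (D : Matrix ι ι R) {i j : ι}
    (hij : i ≠ j) {a b : R} (hab : a + b = 1) :
    replicatorField D (Pi.single i a + Pi.single j b) i
      = a * b * ((D i i * a + D i j * b) - (D j i * a + D j j * b)) := by
  simp only [replicatorField, mulVec_add, add_dotProduct, mulVec_single, single_dotProduct,
    Pi.add_apply, Pi.smul_apply, col_apply, op_smul_eq_mul, Pi.single_eq_same,
    Pi.single_eq_of_ne hij, add_zero]
  linear_combination (-a * (D i i * a + D i j * b)) * hab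

end CommRing

theorem eq_vecMulVec_one_diag_of_replicatorField_eq_zero [Field R] [CharZero R] [DecidableEq ι]
    {D : Matrix ι ι R} (hD : ∀ x : ι → R, ∑ i, x i = 1 → replicatorField D x = 0) :
    D = vecMulVec (fun _ => 1) (fun j => D j j) := by
  ext i j
  rw [vecMulVec_apply, one_mul]
  rcases eq_or_ne i j with rfl | hij
  · rfl
  have hpair : ∀ a b : R, a + b = 1 →
      a * b * ((D i i * a + D i j * b) - (D j i * a + D j j * b)) = 0 := fun a b hab => by
    rw [← replicatorField_single_add_single D hij hab]
    exact congrFun (hD _ (by simp [Finset.sum_add_distrib, hab])) i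
  have h₁ := hpair 2 (-1) (by norm_num)
  have h₂ := hpair (-1) 2 (by norm_num)
  have h₆ : (6 : R) * (D i j - D j j) = 0 := by linear_combination -h₁ - 2 * h₂
  simpa [sub_eq_zero] using h₆

/-- Two constant payoff matrices `H` and `H'` induce the same replicator vector
field `φ(M)(x) = diag(x)(Mx − (xᵀMx)𝟏)` on the hyperplane `{x : xᵀ𝟏 = 1}` if and
only if `H = H' + 𝟏 vᵀ` for some vector `v`. -/
theorem phi_eq_iff_shift_by_ones
    (n : ℕ) (H H' : Matrix (Fin n) (Fin n) ℝ) :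
    (∀ x : Fin n → ℝ, ∑ i, x i = 1 →
      ∀ i, x i * ((H *ᵥ x) i - x ⬝ᵥ (H *ᵥ x))
         = x i * ((H' *ᵥ x) i - x ⬝ᵥ (H' *ᵥ x)))
    ↔ ∃ v : Fin n → ℝ, H = H' + vecMulVec (fun _ => 1) v := by
  constructor
  · intro h
    refine ⟨fun j => (H - H') j j, ?_⟩
    rw [← sub_eq_iff_eq_add']
    refine eq_vecMulVec_one_diag_of_replicatorField_eq_zero fun x hx => ?_
    rw [replicatorField_sub, sub_eq_zero]
    exact funext (h x hx)
  · rintro ⟨v, rfl⟩ x hx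
    rw [← funext_iff]
    change replicatorField (H' + _) x = replicatorField H' x
    rw [replicatorField_add, replicatorField_vecMulVec_one hx, add_zero]
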